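/- Let U be a weakly Ramsey non-selective ultrafilter with witnessing interval partition P, and suppose the cut A_P (generated upward by the functions a^A(x) = |A ∩ [p_n, x)|, A ∈ U) is strictly less than the cut B_P (generated upward by b^A(x) = |A ∩ [x, p_{n+1})|, A ∈ U) in the ultrapower ℕ^ℕ/U. Then U is f-quasi-selective for some function f that is one-to-one modulo U, and U is isomorphic to a quasi-selective ultrafilter. -/

import Mathlib

def Nonprincipal (U : Ultrafilter ℕ) : Prop := ∀ A : Set ℕ, A.Finite → A ∉ U

def UnboundedModU (U : Ultrafilter ℕ) (f : ℕ → ℕ) : Prop := ∀ n : ℕ, {x | n < f x} ∈ U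

def NondecrModU (U : Ultrafilter ℕ) (g : ℕ → ℕ) : Prop :=
  ∃ A ∈ U, ∀ x ∈ A, ∀ y ∈ A, x ≤ y → g x ≤ g y

def QSfor (U : Ultrafilter ℕ) (f : ℕ → ℕ) : Prop :=
  ∀ g : ℕ → ℕ, {x | g x ≤ f x} ∈ U → NondecrModU U g

def Selective (U : Ultrafilter ℕ) : Prop := ∀ g : ℕ → ℕ, NondecrModU U g

def Rapid (U : Ultrafilter ℕ) : Prop :=
  ∀ g : ℕ → ℕ, StrictMono g → ∃ A ∈ U, ∀ n, 1 ≤ n → (A ∩ Set.Iic (g n)).ncard < n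

def WeaklyRamsey (U : Ultrafilter ℕ) : Prop :=
  ∀ (k : ℕ) (c : ℕ → ℕ → Fin k), ∃ A ∈ U, ∃ i j : Fin k,
    ∀ x ∈ A, ∀ y ∈ A, x < y → c x y = i ∨ c x y = j

def leU (U : Ultrafilter ℕ) (f g : ℕ → ℕ) : Prop := {x | f x ≤ g x} ∈ U

def QPoint (U : Ultrafilter ℕ) : Prop :=
  ∀ p : ℕ → ℕ, p 0 = 0 → StrictMono p →
    ∃ A ∈ U, ∀ n, (A ∩ Set.Ico (p n) (p (n+1))).Subsingleton

/-!
The witness is the function `h` squeezed between the two cuts. Weak Ramseyness, applied to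
colourings that also record whether two points share an interval, makes a relation of pairs
uniform on a set in `U`, separately inside intervals and across intervals. For `g ≤ h` this makes
`g` nondecreasing on a set in `U`, and for `h` itself it makes `h` one-to-one there; the bad cases
inside intervals are excluded by counting against `h + 1 < b^A`, which follows from `h < b^A` by
discarding from `A` its interval maxima (they form a selector, so are not in `U`). Finally `U` is
`2h`-quasi-selective, and `2h` extends to an injection of `ℕ` pushing `U` forward to a
quasi-selective ultrafilter.
-/

open Filter Set

/-- For `p 0 = 0` and `p` strictly increasing, the `n` with `p n ≤ x < p (n + 1)`;
`countBelow p A` and `countAbove p A` are the paper's `a^A` and `b^A`. -/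
def intervalIndex (p : ℕ → ℕ) (x : ℕ) : ℕ := Nat.findGreatest (fun k => p k ≤ x) x

noncomputable def countBelow (p : ℕ → ℕ) (A : Set ℕ) (x : ℕ) : ℕ :=
  (A ∩ Ico (p (intervalIndex p x)) x).ncard

noncomputable def countAbove (p : ℕ → ℕ) (A : Set ℕ) (x : ℕ) : ℕ :=
  (A ∩ Ico x (p (intervalIndex p x + 1))).ncard

def intervalMaxima (p : ℕ → ℕ) (S : Set ℕ) : Set ℕ :=
  {m ∈ S | ∀ z ∈ S, intervalIndex p z = intervalIndex p m → z ≤ m}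

section IntervalIndex

variable {p : ℕ → ℕ}

lemma intervalIndex_le (hp0 : p 0 = 0) (x : ℕ) : p (intervalIndex p x) ≤ x :=
  Nat.findGreatest_spec (P := fun k => p k ≤ x) (Nat.zero_le x) (by simp [hp0])

lemma lt_intervalIndex_succ (hpm : StrictMono p) (x : ℕ) : x < p (intervalIndex p x + 1) := by
  by_contra! hle
  have := Nat.le_findGreatest (P := fun k => p k ≤ x) (hpm.le_apply.trans hle) hle
  unfold intervalIndex at *
  omega

lemma intervalIndex_eq_iff (hp0 : p 0 = 0) (hpm : StrictMono p) {x n : ℕ} :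
    intervalIndex p x = n ↔ p n ≤ x ∧ x < p (n + 1) := by
  refine ⟨fun h => h ▸ ⟨intervalIndex_le hp0 x, lt_intervalIndex_succ hpm x⟩, fun ⟨hn, hn'⟩ => ?_⟩
  have hx := intervalIndex_le hp0 x
  have hx' := lt_intervalIndex_succ hpm x
  by_contra hne
  rcases Nat.lt_or_gt_of_ne hne with hlt | hlt
  · have : p (intervalIndex p x + 1) ≤ p n := hpm.monotone hlt
    omega
  · have : p (n + 1) ≤ p (intervalIndex p x) := hpm.monotone hlt
    omega

lemma intervalIndex_eq_of_mem_Ico (hp0 : p 0 = 0) (hpm : StrictMono p) {x z : ℕ}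
    (hz : z ∈ Ico x (p (intervalIndex p x + 1))) : intervalIndex p z = intervalIndex p x :=
  (intervalIndex_eq_iff hp0 hpm).2 ⟨(intervalIndex_le hp0 x).trans hz.1, hz.2⟩

lemma exists_mem_intervalMaxima (hp0 : p 0 = 0) (hpm : StrictMono p) {S : Set ℕ} {x : ℕ}
    (hx : x ∈ S) : ∃ m ∈ intervalMaxima p S, intervalIndex p m = intervalIndex p x ∧ x ≤ m := by
  set T := S ∩ Ico (p (intervalIndex p x)) (p (intervalIndex p x + 1))
  have hxT : x ∈ T := ⟨hx, intervalIndex_le hp0 x, lt_intervalIndex_succ hpm x⟩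
  have hbdd : BddAbove T := ((finite_Ico _ _).subset inter_subset_right).bddAbove
  have hmT : sSup T ∈ T := Nat.sSup_mem ⟨x, hxT⟩ hbdd
  have hm : intervalIndex p (sSup T) = intervalIndex p x :=
    (intervalIndex_eq_iff hp0 hpm).2 hmT.2
  refine ⟨sSup T, ⟨hmT.1, fun z hz hzm => le_csSup hbdd ⟨hz, ?_⟩⟩, hm, le_csSup hbdd hxT⟩
  exact (intervalIndex_eq_iff hp0 hpm).1 (hzm.trans hm)

lemma eq_countBelow_countAbove (hp0 : p 0 = 0) (hpm : StrictMono p) {a b : Set ℕ → ℕ → ℕ}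
    (hab : ∀ (A : Set ℕ) (n x : ℕ), p n ≤ x → x < p (n+1) →
      a A x = (A ∩ Ico (p n) x).ncard ∧ b A x = (A ∩ Ico x (p (n+1))).ncard) :
    a = countBelow p ∧ b = countAbove p := by
  have h A x := hab A _ x (intervalIndex_le hp0 x) (lt_intervalIndex_succ hpm x)
  exact ⟨funext₂ fun A x => (h A x).1, funext₂ fun A x => (h A x).2⟩

end IntervalIndex

lemma WeaklyRamsey.exists_two_colors {U : Ultrafilter ℕ} (hWR : WeaklyRamsey U) {α : Type*}
    [Finite α] (c : ℕ → ℕ → α) :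
    ∃ A ∈ U, ∃ i j : α, ∀ x ∈ A, ∀ y ∈ A, x < y → c x y = i ∨ c x y = j := by
  obtain ⟨k, ⟨e⟩⟩ := Finite.exists_equiv_fin α
  obtain ⟨A, hA, i, j, hij⟩ := hWR k fun x y => e (c x y)
  refine ⟨A, hA, e.symm i, e.symm j, fun x hx y hy hxy => ?_⟩
  simpa only [Equiv.eq_symm_apply] using hij x hx y hy hxy

lemma Set.injOn_pair_of_apply_ne {α β : Type*} {f : α → β} {i j u v : α}
    (hu : u ∈ ({i, j} : Set α)) (hv : v ∈ ({i, j} : Set α)) (huv : f u ≠ f v) :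
    InjOn f {i, j} := by
  aesop

section Ultrafilter

variable {U : Ultrafilter ℕ} {p : ℕ → ℕ}

lemma intervalMaxima_notMem (hp0 : p 0 = 0) (hpm : StrictMono p)
    (hsel : ¬ ∃ A ∈ U, ∀ n, (A ∩ Ico (p n) (p (n+1))).Subsingleton) (S : Set ℕ) :
    intervalMaxima p S ∉ U := by
  refine fun hM => hsel ⟨_, hM, fun n x hx y hy => ?_⟩
  have hxy : intervalIndex p x = intervalIndex p y :=
    ((intervalIndex_eq_iff hp0 hpm).2 hx.2).trans ((intervalIndex_eq_iff hp0 hpm).2 hy.2).symm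
  exact le_antisymm (hy.1.2 x hx.1.1 hxy) (hx.1.2 y hy.1.1 hxy.symm)

lemma exists_lt_intervalIndex_eq (hp0 : p 0 = 0) (hpm : StrictMono p)
    (hsel : ¬ ∃ A ∈ U, ∀ n, (A ∩ Ico (p n) (p (n+1))).Subsingleton) {B : Set ℕ} (hB : B ∈ U) :
    ∃ x ∈ B, ∃ y ∈ B, x < y ∧ intervalIndex p x = intervalIndex p y := by
  by_contra! hcon
  refine hsel ⟨B, hB, fun n x hx y hy => ?_⟩
  have hxy : intervalIndex p x = intervalIndex p y :=
    ((intervalIndex_eq_iff hp0 hpm).2 hx.2).trans ((intervalIndex_eq_iff hp0 hpm).2 hy.2).symm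
  rcases lt_trichotomy x y with h | h | h
  · exact absurd hxy (hcon x hx.1 y hy.1 h)
  · exact h
  · exact absurd hxy.symm (hcon y hy.1 x hx.1 h)

lemma exists_lt_intervalIndex_ne (hpm : StrictMono p) (hNP : Nonprincipal U) {B : Set ℕ}
    (hB : B ∈ U) (x : ℕ) : ∃ y ∈ B, x < y ∧ intervalIndex p x ≠ intervalIndex p y := by
  have hinf : B.Infinite := fun hfin => hNP B hfin hB
  obtain ⟨y, hy, hxy⟩ := hinf.exists_gt (p (intervalIndex p x + 1))
  refine ⟨y, hy, (lt_intervalIndex_succ hpm x).trans hxy, fun hidx => ?_⟩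
  have := lt_intervalIndex_succ hpm y
  rw [← hidx] at this
  omega

/-- A two-coloured set in `U` contains pairs inside one interval and pairs across intervals, so
its two colours differ in the interval bit. -/
lemma exists_mem_pairwise_uniform (hp0 : p 0 = 0) (hpm : StrictMono p)
    (hNP : Nonprincipal U) (hWR : WeaklyRamsey U)
    (hsel : ¬ ∃ A ∈ U, ∀ n, (A ∩ Ico (p n) (p (n+1))).Subsingleton) (R : ℕ → ℕ → Prop) :
    ∃ B ∈ U, ∀ x ∈ B, ∀ y ∈ B, ∀ x' ∈ B, ∀ y' ∈ B, x < y → x' < y' →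
      (intervalIndex p x = intervalIndex p y ↔ intervalIndex p x' = intervalIndex p y') →
      (R x y ↔ R x' y') := by
  classical
  let c x y := (decide (intervalIndex p x = intervalIndex p y), decide (R x y))
  obtain ⟨B, hB, i, j, hij⟩ := hWR.exists_two_colors c
  obtain ⟨x₁, hx₁, y₁, hy₁, hxy₁, hsame⟩ := exists_lt_intervalIndex_eq hp0 hpm hsel hB
  obtain ⟨y₂, hy₂, hxy₂, hdiff⟩ := exists_lt_intervalIndex_ne hpm hNP hB x₁
  have hinj : InjOn Prod.fst {i, j} :=
    Set.injOn_pair_of_apply_ne (hij x₁ hx₁ y₁ hy₁ hxy₁) (hij x₁ hx₁ y₂ hy₂ hxy₂)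
      (by simpa [c, hsame] using hdiff)
  refine ⟨B, hB, fun x hx y hy x' hx' y' hy' hxy hxy' hiff => ?_⟩
  have hc : c x y = c x' y' := hinj (hij x hx y hy hxy) (hij x' hx' y' hy' hxy') (by simpa [c])
  simpa [c] using congrArg Prod.snd hc

end Ultrafilter

lemma Set.ncard_le_succ_of_strictAntiOn {F : Set ℕ} {g : ℕ → ℕ} {a : ℕ}
    (hg : StrictAntiOn g F) (ha : IsLeast F a) : F.ncard ≤ g a + 1 := by
  have hmaps : ∀ z ∈ F, g z ∈ Iio (g a + 1) := fun z hz =>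
    Nat.lt_succ_of_le (hg.antitoneOn ha.1 hz (ha.2 hz))
  calc F.ncard ≤ (Iio (g a + 1)).ncard := ncard_le_ncard_of_injOn g hmaps hg.injOn
    _ = g a + 1 := by rw [← Finset.coe_range, ncard_coe_finset, Finset.card_range]

section Counting

variable {U : Ultrafilter ℕ} {p : ℕ → ℕ}

lemma countAbove_diff_intervalMaxima_lt (hp0 : p 0 = 0) (hpm : StrictMono p) {S : Set ℕ}
    {x : ℕ} (hx : 0 < countAbove p (S \ intervalMaxima p S) x) :
    countAbove p (S \ intervalMaxima p S) x < countAbove p S x := by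
  obtain ⟨y, hyS, hy⟩ := nonempty_of_ncard_ne_zero hx.ne'
  obtain ⟨m, hm, hmy, hym⟩ := exists_mem_intervalMaxima hp0 hpm hyS.1
  have hyx := intervalIndex_eq_of_mem_Ico hp0 hpm hy
  have hmI : m ∈ Ico x (p (intervalIndex p x + 1)) := by
    refine ⟨hy.1.trans hym, ?_⟩
    rw [← hyx, ← hmy]
    exact lt_intervalIndex_succ hpm m
  refine ncard_lt_ncard ((ssubset_iff_of_subset ?_).2 ⟨m, ⟨hm.1, hmI⟩, fun h => h.1.2 hm⟩)
    ((finite_Ico _ _).subset inter_subset_right)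
  exact inter_subset_inter_left _ sdiff_subset

lemma exists_mem_add_one_lt_countAbove (hp0 : p 0 = 0) (hpm : StrictMono p)
    (hsel : ¬ ∃ A ∈ U, ∀ n, (A ∩ Ico (p n) (p (n+1))).Subsingleton) {h : ℕ → ℕ}
    (hb : ∀ A ∈ U, {x | h x < countAbove p A x} ∈ U) {C : Set ℕ} (hC : C ∈ U) :
    ∃ x ∈ C, h x + 1 < countAbove p C x := by
  have hC' : C \ intervalMaxima p C ∈ U :=
    (Ultrafilter.sdiff_mem_iff U).2 ⟨hC, intervalMaxima_notMem hp0 hpm hsel C⟩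
  obtain ⟨x, hxC, hx⟩ := Ultrafilter.nonempty_of_mem (inter_mem hC (hb _ hC'))
  exact ⟨x, hxC, (Nat.succ_le_of_lt hx).trans_lt
    (countAbove_diff_intervalMaxima_lt hp0 hpm (Nat.zero_lt_of_lt hx))⟩

lemma countAbove_le_countBelow_add_one (hp0 : p 0 = 0) (hpm : StrictMono p) {A C : Set ℕ}
    (hCA : C ⊆ A) {x m : ℕ} (hm : m ∈ intervalMaxima p C)
    (hmx : intervalIndex p m = intervalIndex p x) :
    countAbove p C x ≤ countBelow p A m + 1 := by
  have hsub : C ∩ Ico x (p (intervalIndex p x + 1)) ⊆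
      insert m (A ∩ Ico (p (intervalIndex p m)) m) := by
    rintro z ⟨hzC, hz⟩
    have hzx := intervalIndex_eq_of_mem_Ico hp0 hpm hz
    rcases (hm.2 z hzC (hzx.trans hmx.symm)).eq_or_lt with rfl | hzm
    · exact mem_insert _ _
    · exact mem_insert_of_mem _ ⟨hCA hzC, hmx ▸ (intervalIndex_le hp0 x).trans hz.1, hzm⟩
  calc countAbove p C x ≤ (insert m (A ∩ Ico (p (intervalIndex p m)) m)).ncard :=
        ncard_le_ncard hsub (((finite_Ico _ _).subset inter_subset_right).insert m)
    _ ≤ countBelow p A m + 1 := ncard_insert_le _ _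

end Counting

section QuasiSelective

variable {U : Ultrafilter ℕ} {p : ℕ → ℕ}

lemma exists_lt_intervalIndex_ne_le (hpm : StrictMono p) (hNP : Nonprincipal U) {B : Set ℕ}
    (hB : B ∈ U) (g : ℕ → ℕ) :
    ∃ x ∈ B, ∃ y ∈ B, x < y ∧ intervalIndex p x ≠ intervalIndex p y ∧ g x ≤ g y := by
  have hBne : B.Nonempty := Ultrafilter.nonempty_of_mem hB
  set x := Function.argminOn g B hBne
  obtain ⟨y, hy, hxy, hidx⟩ := exists_lt_intervalIndex_ne hpm hNP hB x
  exact ⟨x, Function.argminOn_mem g B hBne, y, hy, hxy, hidx, Function.argminOn_le g B hy⟩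

/-- If `g ≤ h` were strictly decreasing inside the intervals, then at a point `x` with
`h x + 1 < countAbove p C x`, `g` would be injective on those more than `g x + 1` points of `C`
while taking values at most `g x`. -/
lemma exists_lt_intervalIndex_eq_le (hp0 : p 0 = 0) (hpm : StrictMono p)
    (hsel : ¬ ∃ A ∈ U, ∀ n, (A ∩ Ico (p n) (p (n+1))).Subsingleton) {h : ℕ → ℕ}
    (hb : ∀ A ∈ U, {x | h x < countAbove p A x} ∈ U) {g : ℕ → ℕ} (hg : {x | g x ≤ h x} ∈ U)
    {B : Set ℕ} (hB : B ∈ U) :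
    ∃ x ∈ B, ∃ y ∈ B, x < y ∧ intervalIndex p x = intervalIndex p y ∧ g x ≤ g y := by
  by_contra! hdec
  obtain ⟨x, ⟨hxB, hgx⟩, hx⟩ :=
    exists_mem_add_one_lt_countAbove hp0 hpm hsel hb (inter_mem hB hg)
  set F := (B ∩ {x | g x ≤ h x}) ∩ Ico x (p (intervalIndex p x + 1))
  have hanti : StrictAntiOn g F := fun y hy z hz hyz =>
    hdec y hy.1.1 z hz.1.1 hyz <| (intervalIndex_eq_of_mem_Ico hp0 hpm hy.2).trans
      (intervalIndex_eq_of_mem_Ico hp0 hpm hz.2).symm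
  have hleast : IsLeast F x :=
    ⟨⟨⟨hxB, hgx⟩, le_rfl, lt_intervalIndex_succ hpm x⟩, fun z hz => hz.2.1⟩
  have := Set.ncard_le_succ_of_strictAntiOn hanti hleast
  change h x + 1 < F.ncard at hx
  change g x ≤ h x at hgx
  omega

lemma qsFor_of_lt_countAbove (hp0 : p 0 = 0) (hpm : StrictMono p) (hNP : Nonprincipal U)
    (hWR : WeaklyRamsey U) (hsel : ¬ ∃ A ∈ U, ∀ n, (A ∩ Ico (p n) (p (n+1))).Subsingleton)
    {h : ℕ → ℕ} (hb : ∀ A ∈ U, {x | h x < countAbove p A x} ∈ U) : QSfor U h := by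
  intro g hg
  obtain ⟨B, hB, hunif⟩ :=
    exists_mem_pairwise_uniform hp0 hpm hNP hWR hsel fun x y => g x ≤ g y
  refine ⟨B, hB, fun x hx y hy hxy => ?_⟩
  rcases hxy.eq_or_lt with rfl | hxy
  · exact le_rfl
  by_cases hidx : intervalIndex p x = intervalIndex p y
  · obtain ⟨x', hx', y', hy', hxy', hidx', hle⟩ :=
      exists_lt_intervalIndex_eq_le hp0 hpm hsel hb hg hB
    exact (hunif x hx y hy x' hx' y' hy' hxy hxy' (iff_of_true hidx hidx')).2 hle
  · obtain ⟨x', hx', y', hy', hxy', hidx', hle⟩ := exists_lt_intervalIndex_ne_le hpm hNP hB g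
    exact (hunif x hx y hy x' hx' y' hy' hxy hxy' (iff_of_false hidx hidx')).2 hle

/-- If `h` were constant on the intervals, then at a point `x` with
`h x + 1 < countAbove p C x`, the maximum `m` of `C` in the interval of `x` would satisfy
`h m < countBelow p A₀ m`. -/
lemma exists_lt_intervalIndex_eq_ne (hp0 : p 0 = 0) (hpm : StrictMono p)
    (hsel : ¬ ∃ A ∈ U, ∀ n, (A ∩ Ico (p n) (p (n+1))).Subsingleton) {h : ℕ → ℕ} {A₀ : Set ℕ}
    (hA₀ : A₀ ∈ U) (ha : {x | countBelow p A₀ x ≤ h x} ∈ U)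
    (hb : ∀ A ∈ U, {x | h x < countAbove p A x} ∈ U) {B : Set ℕ} (hB : B ∈ U) :
    ∃ x ∈ B, ∃ y ∈ B, x < y ∧ intervalIndex p x = intervalIndex p y ∧ h x ≠ h y := by
  by_contra! hconst
  set C := B ∩ A₀ ∩ {x | countBelow p A₀ x ≤ h x}
  obtain ⟨x, hxC, hx⟩ :=
    exists_mem_add_one_lt_countAbove hp0 hpm hsel hb (inter_mem (inter_mem hB hA₀) ha)
  obtain ⟨m, hm, hmx, hxm⟩ := exists_mem_intervalMaxima hp0 hpm hxC
  have hcount := countAbove_le_countBelow_add_one hp0 hpm (fun z hz => hz.1.2) hm hmx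
  have hhm : h x = h m := by
    rcases hxm.eq_or_lt with rfl | hlt
    · rfl
    · exact hconst x hxC.1.1 m hm.1.1.1 hlt hmx.symm
  have : countBelow p A₀ m ≤ h m := hm.1.2
  omega

lemma exists_injOn_of_countBelow_le (hp0 : p 0 = 0) (hpm : StrictMono p)
    (hNP : Nonprincipal U) (hWR : WeaklyRamsey U)
    (hsel : ¬ ∃ A ∈ U, ∀ n, (A ∩ Ico (p n) (p (n+1))).Subsingleton) {h : ℕ → ℕ} {A₀ : Set ℕ}
    (hA₀ : A₀ ∈ U) (ha : {x | countBelow p A₀ x ≤ h x} ∈ U)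
    (hb : ∀ A ∈ U, {x | h x < countAbove p A x} ∈ U) : ∃ B ∈ U, InjOn h B := by
  obtain ⟨B, hB, hunif⟩ :=
    exists_mem_pairwise_uniform hp0 hpm hNP hWR hsel fun x y => h x ≠ h y
  obtain ⟨x₁, hx₁, y₁, hy₁, hxy₁, hidx₁, hne₁⟩ :=
    exists_lt_intervalIndex_eq_ne hp0 hpm hsel hA₀ ha hb hB
  obtain ⟨w, hw, hyw, hidxw⟩ := exists_lt_intervalIndex_ne hpm hNP hB y₁
  have hdiff : ∃ x ∈ B, ∃ y ∈ B, x < y ∧ intervalIndex p x ≠ intervalIndex p y ∧ h x ≠ h y := by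
    by_cases hxw : h x₁ = h w
    · exact ⟨y₁, hy₁, w, hw, hyw, hidxw, fun hyw' => hne₁ (hxw.trans hyw'.symm)⟩
    · exact ⟨x₁, hx₁, w, hw, hxy₁.trans hyw, hidx₁ ▸ hidxw, hxw⟩
  obtain ⟨x₂, hx₂, y₂, hy₂, hxy₂, hidx₂, hne₂⟩ := hdiff
  have hlt : ∀ x ∈ B, ∀ y ∈ B, x < y → h x ≠ h y := fun x hx y hy hxy => by
    by_cases hidx : intervalIndex p x = intervalIndex p y
    · exact (hunif x hx y hy x₁ hx₁ y₁ hy₁ hxy hxy₁ (iff_of_true hidx hidx₁)).2 hne₁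
    · exact (hunif x hx y hy x₂ hx₂ y₂ hy₂ hxy hxy₂ (iff_of_false hidx hidx₂)).2 hne₂
  refine ⟨B, hB, fun x hx y hy hxy => ?_⟩
  by_contra hne
  rcases Nat.lt_or_gt_of_ne hne with hxy' | hxy'
  · exact hlt x hx y hy hxy' hxy
  · exact hlt y hy x hx hxy' hxy.symm

end QuasiSelective

namespace QSfor

variable {U : Ultrafilter ℕ} {f f' : ℕ → ℕ}

lemma add (hf : QSfor U f) (hf' : QSfor U f') : QSfor U (f + f') := by
  intro g hg
  obtain ⟨A, hA, hmono⟩ :=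
    hf (fun x => min (g x) (f x)) (Eventually.of_forall fun x => min_le_right (g x) (f x))
  obtain ⟨A', hA', hmono'⟩ := hf' (fun x => g x - min (g x) (f x)) <| by
    filter_upwards [hg] with x hx
    simp only [Pi.add_apply] at hx ⊢
    omega
  refine ⟨A ∩ A', inter_mem hA hA', fun x hx y hy hxy => ?_⟩
  have hmin : min (g x) (f x) ≤ min (g y) (f y) := hmono x hx.1 y hy.1 hxy
  have hrest : g x - min (g x) (f x) ≤ g y - min (g y) (f y) := hmono' x hx.2 y hy.2 hxy
  omega

/-- Where `f` is nondecreasing, `y < x` and `φ y ≥ φ x` force `φ x = φ y`. -/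
lemma map_id (hf : QSfor U f) {φ : ℕ → ℕ} (hφ : {x | φ x = f x} ∈ U) :
    QSfor (U.map φ) id := by
  intro g hg
  obtain ⟨A, hA, hmono⟩ := hf (g ∘ φ) <| by
    filter_upwards [Ultrafilter.mem_map.1 hg, hφ] with x hx hφx
    simpa [← hφx] using hx
  obtain ⟨A', hA', hfmono⟩ := hf f (Eventually.of_forall fun x => le_refl (f x))
  have hD : A ∩ A' ∩ {x | φ x = f x} ∈ U := inter_mem (inter_mem hA hA') hφ
  refine ⟨φ '' (A ∩ A' ∩ {x | φ x = f x}),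
    Ultrafilter.mem_map.2 (mem_of_superset hD (subset_preimage_image φ _)), ?_⟩
  rintro _ ⟨x, ⟨⟨hxA, hxA'⟩, hφx⟩, rfl⟩ _ ⟨y, ⟨⟨hyA, hyA'⟩, hφy⟩, rfl⟩ hle
  rcases le_total x y with hxy | hyx
  · exact hmono x hxA y hyA hxy
  · have hφyx : φ y ≤ φ x := calc
      φ y = f y := hφy
      _ ≤ f x := hfmono y hyA' x hxA' hyx
      _ = φ x := hφx.symm
    rw [le_antisymm hle hφyx]

end QSfor

lemma Set.InjOn.exists_injective_eq_two_mul {f : ℕ → ℕ} {B : Set ℕ} (hf : InjOn f B) :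
    ∃ φ : ℕ → ℕ, Function.Injective φ ∧ ∀ x ∈ B, φ x = 2 * f x := by
  classical
  refine ⟨fun x => if x ∈ B then 2 * f x else 2 * x + 1, fun x y hxy => ?_,
    fun x hx => if_pos hx⟩
  by_cases hx : x ∈ B <;> by_cases hy : y ∈ B <;> simp only [hx, hy, if_true, if_false] at hxy
  · exact hf hx hy (by omega)
  all_goals omega

theorem stmt18 (U : Ultrafilter ℕ) (hNP : Nonprincipal U) (hWR : WeaklyRamsey U)
    (p : ℕ → ℕ) (hp0 : p 0 = 0) (hpm : StrictMono p)
    (hsel : ¬ ∃ A ∈ U, ∀ n, (A ∩ Set.Ico (p n) (p (n+1))).Subsingleton)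
    (a b : Set ℕ → ℕ → ℕ)
    (hab : ∀ (A : Set ℕ) (n x : ℕ), p n ≤ x → x < p (n+1) →
      a A x = (A ∩ Set.Ico (p n) x).ncard ∧ b A x = (A ∩ Set.Ico x (p (n+1))).ncard)
    (hAB : ∃ h : ℕ → ℕ, (∃ A ∈ U, leU U (a A) h) ∧ (∀ A ∈ U, {x | h x < b A x} ∈ U)) :
    (∃ f : ℕ → ℕ, (∃ A ∈ U, Set.InjOn f A) ∧ QSfor U f) ∧
    (∃ φ : ℕ → ℕ, Function.Injective φ ∧ QSfor (Ultrafilter.map φ U) id) := by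
  obtain ⟨h, ⟨A₀, hA₀, ha⟩, hb⟩ := hAB
  obtain ⟨rfl, rfl⟩ := eq_countBelow_countAbove hp0 hpm hab
  have hQS : QSfor U h := qsFor_of_lt_countAbove hp0 hpm hNP hWR hsel hb
  obtain ⟨B, hB, hinj⟩ := exists_injOn_of_countBelow_le hp0 hpm hNP hWR hsel hA₀ ha hb
  obtain ⟨φ, hφ, hφB⟩ := hinj.exists_injective_eq_two_mul
  refine ⟨⟨h, ⟨B, hB, hinj⟩, hQS⟩, φ, hφ, (hQS.add hQS).map_id ?_⟩
  filter_upwards [hB] with x hx using (hφB x hx).trans (two_mul _)
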